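/- arXiv:2006.02778 — 3 statements merged into one kernel-verified Lean document; each statement's English description precedes it below -/
import Mathlib

section
/- (Birman–Schwinger principle, bounded case) Let H₀ be a closed densely defined operator on a Hilbert space ℌ with z ∈ ρ(H₀), and let A, B be bounded operators from ℌ to ℌ'. Set H = H₀ + B*A and Q(z) = A (H₀ − z)⁻¹ B*. If z ∈ σ_p(H) ∩ ρ(H₀) with eigenfunction ψ ≠ 0, then φ := Aψ is nonzero and satisfies Q(z)φ = −φ; in particular ‖Q(z)‖_{ℌ'→ℌ'} ≥ 1. -/
/-- Birman–Schwinger principle, bounded case: if `z ∈ ρ(H₀)`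
(witnessed by a two-sided resolvent `R = (H₀ − z)⁻¹`), `A, B` are bounded,
`σ_p(H₀) = ∅`, and `ψ ≠ 0` is an eigenfunction of `H = H₀ + B*A` with
eigenvalue `z`, then `φ = Aψ ≠ 0`, `Q(z)φ = −φ` for the Birman–Schwinger
operator `Q(z) = A (H₀ − z)⁻¹ B*`, and in particular `‖Q(z)‖ ≥ 1`. -/
theorem birman_schwinger_principle_bounded
    {H H' : Type*} [NormedAddCommGroup H] [InnerProductSpace ℂ H] [CompleteSpace H]
    [NormedAddCommGroup H'] [InnerProductSpace ℂ H'] [CompleteSpace H']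
    (H0 : H →ₗ[ℂ] H) (z : ℂ) (R : H →L[ℂ] H)
    (hR1 : ∀ x : H, R (H0 x - z • x) = x)
    (hR2 : ∀ y : H, H0 (R y) - z • (R y) = y)
    (A B : H →L[ℂ] H')
    (hp : ∀ (w : ℂ) (χ : H), χ ≠ 0 → H0 χ ≠ w • χ)
    (ψ : H) (hψ : ψ ≠ 0)
    (heig : H0 ψ + (ContinuousLinearMap.adjoint B) (A ψ) = z • ψ) :
    A ψ ≠ 0 ∧
    (A.comp (R.comp (ContinuousLinearMap.adjoint B))) (A ψ) = -(A ψ) ∧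
    1 ≤ ‖A.comp (R.comp (ContinuousLinearMap.adjoint B))‖ := by
  have hA : A ψ ≠ 0 := by
    intro h0
    apply hp z ψ hψ
    rw [h0, map_zero, add_zero] at heig
    exact heig
  have h1 : H0 ψ - z • ψ = -((ContinuousLinearMap.adjoint B) (A ψ)) := by
    rw [← heig]; abel
  have key : ψ = -R ((ContinuousLinearMap.adjoint B) (A ψ)) := by
    have := hR1 ψ
    rw [h1, map_neg] at this
    exact this.symm
  have hQ : (A.comp (R.comp (ContinuousLinearMap.adjoint B))) (A ψ) = -(A ψ) := by
    conv_rhs => rw [key]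
    simp
  refine ⟨hA, hQ, ?_⟩
  have := (A.comp (R.comp (ContinuousLinearMap.adjoint B))).le_opNorm (A ψ)
  rw [hQ, norm_neg] at this
  have hn : 0 < ‖A ψ‖ := norm_pos_iff.mpr hA
  nlinarith
end

section
/- (Birman–Schwinger operator difference) Under the hypotheses of the abstract Birman–Schwinger setup, for z₁, z₂ ∈ ρ(H₀) the closed Birman–Schwinger operators Q(z) = \overline{A R_{H₀}(z) B*} satisfy Q(z₁) − Q(z₂) = (z₁ − z₂) A R_{H₀}(z₁) \overline{R_{H₀}(z₂) B*} = (z₁ − z₂) A R_{H₀}(z₂) \overline{R_{H₀}(z₁) B*}. -/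
/-- Birman–Schwinger operator difference: in the abstract
Birman–Schwinger setup, for `z₁, z₂` in the resolvent set the closed
Birman–Schwinger operators `Q(z) = A R(z) B*` (with `A R(z)` bounded and
`S z` the bounded closure of `R(z) B*`) satisfy
`Q(z₁) − Q(z₂) = (z₁ − z₂) A R(z₁) S(z₂) = (z₁ − z₂) A R(z₂) S(z₁)`. -/
theorem birman_schwinger_operator_difference
    {H H' : Type*} [NormedAddCommGroup H] [InnerProductSpace ℂ H] [CompleteSpace H]
    [NormedAddCommGroup H'] [InnerProductSpace ℂ H'] [CompleteSpace H']
    (z₁ z₂ : ℂ) (R : ℂ → H →L[ℂ] H)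
    (hres : R z₁ - R z₂ = (z₁ - z₂) • (R z₁).comp (R z₂))
    (hcomm : (R z₁).comp (R z₂) = (R z₂).comp (R z₁))
    (A : H →ₗ[ℂ] H') (AR : ℂ → H →L[ℂ] H')
    (hAR : ∀ z ∈ ({z₁, z₂} : Set ℂ), ∀ x : H, AR z x = A (R z x))
    (D : Submodule ℂ H') (hD : Dense (D : Set H')) (Bs : D →ₗ[ℂ] H)
    (S : ℂ → H' →L[ℂ] H)
    (hS : ∀ z ∈ ({z₁, z₂} : Set ℂ), ∀ x : D, S z x = R z (Bs x))
    (Q : ℂ → H' →L[ℂ] H')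
    (hQ : ∀ z ∈ ({z₁, z₂} : Set ℂ), ∀ v : H', Q z v = A (S z v)) :
    Q z₁ - Q z₂ = (z₁ - z₂) • (AR z₁).comp (S z₂) ∧
    Q z₁ - Q z₂ = (z₁ - z₂) • (AR z₂).comp (S z₁) := by
  have h1 : z₁ ∈ ({z₁, z₂} : Set ℂ) := Or.inl rfl
  have h2 : z₂ ∈ ({z₁, z₂} : Set ℂ) := Or.inr rfl
  have key : ∀ x : D,
      (Q z₁ - Q z₂) (x : H') = ((z₁ - z₂) • (AR z₁).comp (S z₂)) (x : H') ∧
      (Q z₁ - Q z₂) (x : H') = ((z₁ - z₂) • (AR z₂).comp (S z₁)) (x : H') := by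
    intro x
    have hdiff : R z₁ (Bs x) - R z₂ (Bs x) = (z₁ - z₂) • R z₁ (R z₂ (Bs x)) := by
      have := congrArg (fun T : H →L[ℂ] H => T (Bs x)) hres
      simpa using this
    have hcomm' : R z₁ (R z₂ (Bs x)) = R z₂ (R z₁ (Bs x)) := by
      have := congrArg (fun T : H →L[ℂ] H => T (Bs x)) hcomm
      simpa using this
    constructor
    · simp only [ContinuousLinearMap.sub_apply, ContinuousLinearMap.smul_apply,
        ContinuousLinearMap.comp_apply, hQ z₁ h1, hQ z₂ h2, hAR z₁ h1,
        hS z₁ h1 x, hS z₂ h2 x]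
      rw [← map_sub, hdiff, map_smul]
    · simp only [ContinuousLinearMap.sub_apply, ContinuousLinearMap.smul_apply,
        ContinuousLinearMap.comp_apply, hQ z₁ h1, hQ z₂ h2, hAR z₂ h2,
        hS z₁ h1 x, hS z₂ h2 x]
      rw [← map_sub, hdiff, hcomm', map_smul]
  constructor
  · apply ContinuousLinearMap.coeFn_injective
    refine Continuous.ext_on hD (Q z₁ - Q z₂).continuous
      ((z₁ - z₂) • (AR z₁).comp (S z₂)).continuous ?_
    rintro v hv
    exact (key ⟨v, hv⟩).1
  · apply ContinuousLinearMap.coeFn_injective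
    refine Continuous.ext_on hD (Q z₁ - Q z₂).continuous
      ((z₁ - z₂) • (AR z₂).comp (S z₁)).continuous ?_
    rintro v hv
    exact (key ⟨v, hv⟩).2
end

section
/- (Dirac resolvent factorization estimate) Let z ∈ ρ(𝒟₀) and suppose the Schrödinger resolvent bounds ‖R_{−Δ}(w)‖_{X→X*} ≤ C |w|^{−1/2} and ‖∂_k R_{−Δ}(w)‖_{X→X*} ≤ C hold for all w ∈ ℂ \ [0, ∞) and k ∈ {1,…,n}, with w = z² − m². Then, using R_{𝒟₀}(z) = (𝒟₀ + z) R_{−Δ}(z² − m²) and |z ± m| = |z² − m²|^{1/2} |(z±m)/(z∓m)|^{1/2}, the Dirac resolvent satisfies ‖R_{𝒟₀}(z)‖_{X→X*} ≤ C [ n + max(|z+m|, |z−m|) · |z²−m²|^{−1/2} ] = C [ n + |(z+m)/(z−m)|^{sgn(Re z)/2} ]. -/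
open scoped BigOperators

-- Also valid when `a = 0` or `b = 0`, through `0 ^ (-(1 / 2)) = 0` and `a / 0 = 0`.
theorem Real.mul_mul_rpow_neg_half {a b : ℝ} (ha : 0 ≤ a) (hb : 0 ≤ b) :
    a * (a * b) ^ (-(1 / 2) : ℝ) = (a / b) ^ ((1 : ℝ) / 2) := by
  have ha_half : a * a ^ (-(1 / 2) : ℝ) = a ^ ((1 : ℝ) / 2) := by
    conv_rhs => rw [show (1 : ℝ) / 2 = 1 + -(1 / 2) by norm_num]
    rw [Real.rpow_add' ha (by norm_num), Real.rpow_one]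
  rw [Real.mul_rpow ha hb, ← mul_assoc, ha_half, Real.div_rpow ha hb, Real.rpow_neg hb]
  rfl

theorem Complex.norm_sub_ofReal_le_norm_add_ofReal {z : ℂ} {m : ℝ} (h : 0 ≤ m * z.re) :
    ‖z - m‖ ≤ ‖z + m‖ := by
  -- `‖z + m‖² - ‖z - m‖² = 4 m Re z`
  rw [← sq_le_sq₀ (norm_nonneg _) (norm_nonneg _), Complex.sq_norm, Complex.sq_norm,
    Complex.normSq_apply, Complex.normSq_apply]
  simp only [Complex.add_re, Complex.sub_re, Complex.add_im, Complex.sub_im,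
    Complex.ofReal_re, Complex.ofReal_im]
  nlinarith

theorem ContinuousLinearMap.opNorm_le_of_le_sum_add_mul
    {𝕜 ι E F G H : Type*} [Fintype ι] [NontriviallyNormedField 𝕜]
    [SeminormedAddCommGroup E] [NormedSpace 𝕜 E] [SeminormedAddCommGroup F] [NormedSpace 𝕜 F]
    [SeminormedAddCommGroup G] [NormedSpace 𝕜 G] [SeminormedAddCommGroup H] [NormedSpace 𝕜 H]
    {D : ι → E →L[𝕜] F} {R : E →L[𝕜] G} {T : E →L[𝕜] H} {c C C' : ℝ}
    (hc : 0 ≤ c) (hC : 0 ≤ C) (hD : ∀ i, ‖D i‖ ≤ C) (hR : ‖R‖ ≤ C')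
    (hT : ∀ f, ‖T f‖ ≤ (∑ i, ‖D i f‖) + c * ‖R f‖) :
    ‖T‖ ≤ Fintype.card ι * C + c * C' := by
  have hC' : 0 ≤ C' := (norm_nonneg R).trans hR
  refine T.opNorm_le_bound (by positivity) fun f => ?_
  have hDf : ∑ i, ‖D i f‖ ≤ Fintype.card ι * (C * ‖f‖) := by
    refine (Finset.sum_le_sum fun i _ => (D i).le_of_opNorm_le (hD i) f).trans_eq ?_
    rw [Finset.sum_const, Finset.card_univ, nsmul_eq_mul]
  calc ‖T f‖ ≤ (∑ i, ‖D i f‖) + c * ‖R f‖ := hT f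
    _ ≤ Fintype.card ι * (C * ‖f‖) + c * (C' * ‖f‖) := by
      gcongr
      exact R.le_of_opNorm_le hR f
    _ = (Fintype.card ι * C + c * C') * ‖f‖ := by ring

theorem Complex.max_norm_add_sub_ofReal_mul_rpow_neg_half {z : ℂ} {m : ℝ} (hm : 0 ≤ m)
    (hre : z.re ≠ 0) :
    max ‖z + m‖ ‖z - m‖ * ‖z ^ 2 - (m : ℂ) ^ 2‖ ^ (-(1 / 2) : ℝ)
      = ‖(z + m) / (z - m)‖ ^ (Real.sign z.re / 2) := by
  have hfactor : ‖z ^ 2 - (m : ℂ) ^ 2‖ = ‖z + m‖ * ‖z - m‖ := by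
    rw [← norm_mul]; ring_nf
  rw [hfactor, norm_div]
  rcases hre.lt_or_gt with hneg | hpos
  · have hle : ‖z + m‖ ≤ ‖z - m‖ := by
      simpa [sub_neg_eq_add, ← sub_eq_add_neg] using
        norm_sub_ofReal_le_norm_add_ofReal (z := z) (m := -m)
          (mul_nonneg_of_nonpos_of_nonpos (neg_nonpos.2 hm) hneg.le)
    rw [max_eq_right hle, Real.sign_of_neg hneg, mul_comm ‖z + m‖,
      Real.mul_mul_rpow_neg_half (norm_nonneg _) (norm_nonneg _), neg_div,
      Real.rpow_neg (by positivity), ← Real.inv_rpow (by positivity), inv_div]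
  · rw [max_eq_left (norm_sub_ofReal_le_norm_add_ofReal (mul_nonneg hm hpos.le)),
      Real.sign_of_pos hpos, Real.mul_mul_rpow_neg_half (norm_nonneg _) (norm_nonneg _)]

theorem dirac_resolvent_estimate_general
    {X Xs : Type*} [NormedAddCommGroup X] [NormedSpace ℂ X]
    [NormedAddCommGroup Xs] [NormedSpace ℂ Xs]
    (n : ℕ) (m C : ℝ) (hm : 0 ≤ m) (hC : 0 ≤ C)
    (z : ℂ)
    (Dk : Fin n → X →L[ℂ] Xs) (hDk : ∀ k, ‖Dk k‖ ≤ C)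
    (R0 : X →L[ℂ] Xs)
    (hR0 : ‖R0‖ ≤ C * ‖z ^ 2 - (m : ℂ) ^ 2‖ ^ (-(1 / 2) : ℝ))
    (RD : X →L[ℂ] Xs)
    (hRD : ∀ f : X, ‖RD f‖ ≤ (∑ k : Fin n, ‖Dk k f‖) +
      max (‖z + (m : ℂ)‖) (‖z - (m : ℂ)‖) * ‖R0 f‖) :
    ‖RD‖ ≤ C * ((n : ℝ) +
      max (‖z + (m : ℂ)‖) (‖z - (m : ℂ)‖) *
        ‖z ^ 2 - (m : ℂ) ^ 2‖ ^ (-(1 / 2) : ℝ)) ∧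
    (z.re ≠ 0 →
      max (‖z + (m : ℂ)‖) (‖z - (m : ℂ)‖) *
          ‖z ^ 2 - (m : ℂ) ^ 2‖ ^ (-(1 / 2) : ℝ)
        = ‖(z + (m : ℂ)) / (z - (m : ℂ))‖ ^ (Real.sign z.re / 2)) := by
  have hmax : 0 ≤ max ‖z + (m : ℂ)‖ ‖z - (m : ℂ)‖ := (norm_nonneg _).trans (le_max_left _ _)
  refine ⟨?_, fun hre => Complex.max_norm_add_sub_ofReal_mul_rpow_neg_half hm hre⟩
  refine (ContinuousLinearMap.opNorm_le_of_le_sum_add_mul hmax hC hDk hR0 hRD).trans_eq ?_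
  simp only [Fintype.card_fin]
  ring

/-- Dirac resolvent factorization estimate: if the components
`∂_k R_{−Δ}(z²−m²)` and `R_{−Δ}(z²−m²)` satisfy the uniform bounds `‖·‖ ≤ C`
and `‖·‖ ≤ C|z²−m²|^{−1/2}` respectively, and the Dirac resolvent
`R_{𝒟₀}(z) = (𝒟₀ + z) R_{−Δ}(z²−m²)` obeys the pointwise bound coming from the
unitarity of the Clifford matrices, then
`‖R_{𝒟₀}(z)‖_{X→X*} ≤ C[n + max(|z+m|,|z−m|)·|z²−m²|^{−1/2}]`, and for
`Re z ≠ 0` the factor equals `|(z+m)/(z−m)|^{sgn(Re z)/2}`. -/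
theorem dirac_resolvent_estimate
    {X Xs : Type*} [NormedAddCommGroup X] [NormedSpace ℂ X]
    [NormedAddCommGroup Xs] [NormedSpace ℂ Xs]
    (n : ℕ) (hn : 2 ≤ n) (m C : ℝ) (hm : 0 ≤ m) (hC : 0 ≤ C)
    (z : ℂ) (hz : ¬(z.im = 0 ∧ m ≤ |z.re|))
    (Dk : Fin n → X →L[ℂ] Xs) (hDk : ∀ k, ‖Dk k‖ ≤ C)
    (R0 : X →L[ℂ] Xs)
    (hR0 : ‖R0‖ ≤ C * ‖z ^ 2 - (m : ℂ) ^ 2‖ ^ (-(1 / 2) : ℝ))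
    (RD : X →L[ℂ] Xs)
    (hRD : ∀ f : X, ‖RD f‖ ≤ (∑ k : Fin n, ‖Dk k f‖) +
      max (‖z + (m : ℂ)‖) (‖z - (m : ℂ)‖) * ‖R0 f‖) :
    ‖RD‖ ≤ C * ((n : ℝ) +
      max (‖z + (m : ℂ)‖) (‖z - (m : ℂ)‖) *
        ‖z ^ 2 - (m : ℂ) ^ 2‖ ^ (-(1 / 2) : ℝ)) ∧
    (z.re ≠ 0 →
      max (‖z + (m : ℂ)‖) (‖z - (m : ℂ)‖) *
          ‖z ^ 2 - (m : ℂ) ^ 2‖ ^ (-(1 / 2) : ℝ)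
        = ‖(z + (m : ℂ)) / (z - (m : ℂ))‖ ^ (Real.sign z.re / 2)) :=
  dirac_resolvent_estimate_general n m C hm hC z Dk hDk R0 hR0 RD hRD
end
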